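/- Let N ≥ 2 and let y₁, …, y_{N−1} be real numbers with 0 ≤ y_i ≤ 1 for all i. Set S := 1 + ∑_{i=1}^{N−1} y_i and m := ⌈S⌉, and suppose m ≥ 3. Then ∑_{k=1}^{N−1} y_k / ((N − k)·(1 + ∑_{i=1}^{k} y_i)) ≤ (4·H_{m−2} + 1)/(m − 1), where H_j = ∑_{l=1}^{j} 1/l is the j-th harmonic number. -/

import Mathlib

/-!
Put `s k = 1 + y 1 + ⋯ + y k`, so that `s 0 = 1`, the increments of `s` lie in `[0, 1]` and
`m - 1 < s (N - 1) ≤ m`. As the increments after step `k` are at most `1`, the factor `N - k`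
exceeds both `0` and `m - s k`, so the `k`-th term is at most the increment of the potential
`seriesPotential m` between `s (k - 1)` and `s k`. The sum therefore telescopes to
`seriesPotential m (s (N - 1)) - seriesPotential m 1 = O(log m / m)`, and
`H_j ≥ 1 + log ((j + 1) / 2)` converts this into the harmonic bound.
-/

open Finset Real

theorem sum_Icc_one_eq_sum_range {α : Type*} [AddCommMonoid α] (f : ℕ → α) (n : ℕ) :
    ∑ k ∈ Icc 1 n, f k = ∑ k ∈ range n, f (k + 1) := by
  rw [← Ico_add_one_right_eq_Icc, sum_Ico_eq_sum_range, Nat.add_sub_cancel]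
  exact sum_congr rfl fun k _ => by rw [add_comm]

theorem le_and_le_add_sub_of_sub_mem_Icc {s : ℕ → ℝ} {n : ℕ}
    (hstep : ∀ k < n, s (k + 1) - s k ∈ Set.Icc 0 1) {i j : ℕ} (hij : i ≤ j) (hjn : j ≤ n) :
    s i ≤ s j ∧ s j ≤ s i + (j - i) := by
  induction j, hij using Nat.le_induction with
  | base => simp
  | succ j hij ih =>
    obtain ⟨h0, h1⟩ := hstep j (by omega)
    obtain ⟨ih0, ih1⟩ := ih (by omega)
    push_cast
    constructor <;> linarith

theorem sub_div_le_log_sub_log {a b : ℝ} (ha : 0 < a) (hb : 0 < b) :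
    (b - a) / b ≤ log b - log a := by
  have h := one_sub_inv_le_log_of_pos (div_pos hb ha)
  rw [log_div hb.ne' ha.ne', inv_div] at h
  rwa [sub_div, div_self hb.ne']

theorem log_sub_log_le_sub_div {a b : ℝ} (ha : 0 < a) (hb : 0 < b) :
    log b - log a ≤ (b - a) / a := by
  have h := log_le_sub_one_of_pos (div_pos hb ha)
  rw [log_div hb.ne' ha.ne'] at h
  rwa [sub_div, div_self ha.ne']

theorem one_add_log_div_two_le_harmonic {n : ℕ} (hn : 1 ≤ n) :
    1 + log ((n + 1) / 2) ≤ harmonic n := by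
  induction n, hn using Nat.le_induction with
  | base => norm_num [harmonic]
  | succ n hn ih =>
    have hstep := log_sub_log_le_sub_div (a := (n + 1) / 2) (b := (n + 1 + 1) / 2)
      (by positivity) (by positivity)
    have hdiv : ((n + 1 + 1) / 2 - (n + 1) / 2) / ((n + 1) / 2) = ((n : ℝ) + 1)⁻¹ := by
      field_simp; ring
    push_cast [harmonic_succ]
    linarith

/-- For `x ≤ M - 3/2` the logarithmic part majorizes the sum of `1 / ((M - x) x)
= (1 / x + 1 / (M - x)) / M`; on the last stretch `(M - 3/2, M]` the linear part pays
for the increments at the rate `1 / (M - 3/2)`. -/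
noncomputable def seriesPotential (M x : ℝ) : ℝ :=
  (log x - log (max (M - 1 - x) (1 / 2))) / M + max x (M - 5 / 2) / (M - 3 / 2)

noncomputable def seriesPotentialBound (M : ℝ) : ℝ :=
  (log M + log 2 + log (M - 2)) / M + 5 / 2 / (M - 3 / 2)

section seriesPotential

variable {M a b D : ℝ}

theorem sub_div_mul_le_seriesPotential_sub_of_le (hM : 3 ≤ M) (ha : 1 ≤ a) (hab : a ≤ b)
    (hba : b - a ≤ 1) (hMD : M - b < D) (hbM : b ≤ M - 3 / 2) :
    (b - a) / (D * b) ≤ seriesPotential M b - seriesPotential M a := by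
  have hMa : 0 < M - 1 - a := by linarith
  have hMb : 0 < M - 1 - b := by linarith
  have hshift : (b - a) / (M - b) ≤ (b - a) / (M - 1 - a) :=
    div_le_div_of_nonneg_left (by linarith) hMa (by linarith)
  have hlog_a := sub_div_le_log_sub_log (a := a) (b := b) (by linarith) (by linarith)
  have hlog_Ma := sub_div_le_log_sub_log hMb hMa
  rw [show M - 1 - a - (M - 1 - b) = b - a by ring] at hlog_Ma
  have hpot : seriesPotential M b - seriesPotential M a =
      ((log b - log a) + (log (M - 1 - a) - log (M - 1 - b))) / M +
        (max b (M - 5 / 2) - max a (M - 5 / 2)) / (M - 3 / 2) := by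
    simp only [seriesPotential, max_eq_left (by linarith : 1 / 2 ≤ M - 1 - a),
      max_eq_left (by linarith : 1 / 2 ≤ M - 1 - b)]
    ring
  have hmax : 0 ≤ (max b (M - 5 / 2) - max a (M - 5 / 2)) / (M - 3 / 2) :=
    div_nonneg (sub_nonneg.2 (max_le_max_right _ hab)) (by linarith)
  rw [hpot]
  calc (b - a) / (D * b) ≤ (b - a) / ((M - b) * b) := by gcongr <;> nlinarith
    _ = ((b - a) / b + (b - a) / (M - b)) / M := by
      field_simp [(by linarith : M - b ≠ 0), (by linarith : b ≠ 0)]; ring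
    _ ≤ ((b - a) / b + (b - a) / (M - 1 - a)) / M := by gcongr
    _ ≤ ((log b - log a) + (log (M - 1 - a) - log (M - 1 - b))) / M := by gcongr
    _ ≤ _ := le_add_of_nonneg_right hmax

theorem sub_div_mul_le_seriesPotential_sub_of_lt (hM : 3 ≤ M) (ha : 1 ≤ a) (hab : a ≤ b)
    (hba : b - a ≤ 1) (hD : 1 ≤ D) (hbM : M - 3 / 2 < b) :
    (b - a) / (D * b) ≤ seriesPotential M b - seriesPotential M a := by
  have hpot : seriesPotential M b - seriesPotential M a =
      ((log b - log a) + (log (max (M - 1 - a) (1 / 2)) - log (max (M - 1 - b) (1 / 2)))) / M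
        + (b - a) / (M - 3 / 2) := by
    simp only [seriesPotential, max_eq_left (by linarith : M - 5 / 2 ≤ a),
      max_eq_left (by linarith : M - 5 / 2 ≤ b)]
    ring
  have hlog : 0 ≤ ((log b - log a) +
      (log (max (M - 1 - a) (1 / 2)) - log (max (M - 1 - b) (1 / 2)))) / M := by
    have h1 : log a ≤ log b := log_le_log (by linarith) hab
    have h2 : log (max (M - 1 - b) (1 / 2)) ≤ log (max (M - 1 - a) (1 / 2)) :=
      log_le_log (by positivity) (max_le_max_right _ (by linarith))
    exact div_nonneg (by linarith) (by linarith)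
  rw [hpot]
  calc (b - a) / (D * b) ≤ (b - a) / (M - 3 / 2) := by gcongr <;> nlinarith
    _ ≤ _ := le_add_of_nonneg_left hlog

theorem sub_div_mul_le_seriesPotential_sub (hM : 3 ≤ M) (ha : 1 ≤ a) (hab : a ≤ b)
    (hba : b - a ≤ 1) (hD : 1 ≤ D) (hMD : M - b < D) :
    (b - a) / (D * b) ≤ seriesPotential M b - seriesPotential M a := by
  rcases le_or_gt b (M - 3 / 2) with hbM | hbM
  · exact sub_div_mul_le_seriesPotential_sub_of_le hM ha hab hba hMD hbM
  · exact sub_div_mul_le_seriesPotential_sub_of_lt hM ha hab hba hD hbM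

theorem seriesPotential_sub_one_le {S : ℝ} (hM : 3 ≤ M) (hS : 1 ≤ S) (hSM : S ≤ M) :
    seriesPotential M S - seriesPotential M 1 ≤ seriesPotentialBound M := by
  have hpot : seriesPotential M S - seriesPotential M 1 =
      (log S - log (max (M - 1 - S) (1 / 2)) + log (M - 2)) / M +
        (max S (M - 5 / 2) - max 1 (M - 5 / 2)) / (M - 3 / 2) := by
    simp only [seriesPotential, log_one, max_eq_left (by linarith : 1 / 2 ≤ M - 1 - 1)]
    ring_nf
  have hlogS : log S ≤ log M := log_le_log (by linarith) hSM
  have hlog_half : -log 2 ≤ log (max (M - 1 - S) (1 / 2)) := by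
    rw [← log_inv, ← one_div]
    exact log_le_log (by norm_num) (le_max_right _ _)
  have hmaxS : max S (M - 5 / 2) ≤ M := max_le hSM (by linarith)
  have hmax1 : M - 5 / 2 ≤ max 1 (M - 5 / 2) := le_max_right _ _
  rw [hpot, seriesPotentialBound]
  gcongr <;> linarith

end seriesPotential

theorem seriesPotentialBound_le_of_four_le {M H : ℝ} (hM : 4 ≤ M)
    (hH : 1 + log ((M - 1) / 2) ≤ H) : seriesPotentialBound M ≤ (4 * H + 1) / (M - 1) := by
  have hlogs : log M + log (M - 2) ≤ 2 * log (M - 1) := by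
    rw [two_mul, ← log_mul (by linarith) (by linarith), ← log_mul (by linarith) (by linarith)]
    exact log_le_log (by nlinarith) (by nlinarith)
  have hlog3 : log 3 ≤ log (M - 1) := log_le_log (by norm_num) (by linarith)
  have hlog8 : 3 * log 2 ≤ 2 * log 3 := by
    have h89 : log (2 ^ 3) ≤ log (3 ^ 2) := log_le_log (by norm_num) (by norm_num)
    simpa only [log_pow, Nat.cast_ofNat] using h89
  have hlog2 : log 2 ≤ 1 := by
    have := log_le_sub_one_of_pos (by norm_num : (0 : ℝ) < 2)
    linarith
  rw [log_div (by linarith) (by norm_num)] at hH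
  have hfirst : (log M + log 2 + log (M - 2)) / M * (M - 1) ≤ log M + log 2 + log (M - 2) := by
    have hnonneg : 0 ≤ log M + log 2 + log (M - 2) := by
      have := log_nonneg (by linarith : (1 : ℝ) ≤ M - 2)
      have := log_nonneg (by linarith : (1 : ℝ) ≤ M)
      have := log_nonneg (by norm_num : (1 : ℝ) ≤ 2)
      linarith
    rw [div_mul_eq_mul_div, div_le_iff₀ (by linarith)]
    nlinarith
  have hsecond : 5 / 2 / (M - 3 / 2) * (M - 1) ≤ 3 := by
    rw [div_mul_eq_mul_div, div_le_iff₀ (by linarith)]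
    linarith
  rw [seriesPotentialBound, le_div_iff₀ (by linarith), add_mul]
  linarith

theorem seriesPotentialBound_natCast_le_harmonic {m : ℕ} (hm : 3 ≤ m) :
    seriesPotentialBound m ≤ (4 * harmonic (m - 2) + 1) / (m - 1) := by
  rcases hm.eq_or_lt with rfl | hm4
  · have hlog3 : log 3 ≤ 2 * log 2 := by
      rw [two_mul, ← log_mul (by norm_num) (by norm_num)]
      exact log_le_log (by norm_num) (by norm_num)
    have := log_two_lt_d9
    norm_num [seriesPotentialBound, harmonic]
    linarith
  · have hH := one_add_log_div_two_le_harmonic (n := m - 2) (by omega)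
    rw [Nat.cast_sub (by omega)] at hH
    push_cast at hH
    refine seriesPotentialBound_le_of_four_le (by exact_mod_cast hm4) ?_
    convert hH using 3
    ring

theorem sum_sub_div_le_seriesPotential_sub {s : ℕ → ℝ} {n : ℕ} {M : ℝ} (hM : 3 ≤ M)
    (hs0 : s 0 = 1) (hstep : ∀ k < n, s (k + 1) - s k ∈ Set.Icc 0 1)
    (hsn : M - 1 < s n) :
    ∑ k ∈ range n, (s (k + 1) - s k) / ((n - k) * s (k + 1)) ≤
      seriesPotential M (s n) - seriesPotential M 1 := by
  calc ∑ k ∈ range n, (s (k + 1) - s k) / ((n - k) * s (k + 1))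
      ≤ ∑ k ∈ range n, (seriesPotential M (s (k + 1)) - seriesPotential M (s k)) := by
        refine sum_le_sum fun k hk => ?_
        have hk : k < n := mem_range.1 hk
        have hkn : (k : ℝ) + 1 ≤ n := by exact_mod_cast hk
        obtain ⟨h0k, -⟩ := le_and_le_add_sub_of_sub_mem_Icc hstep (Nat.zero_le k) hk.le
        obtain ⟨hinc0, hinc1⟩ := hstep k hk
        obtain ⟨-, htail⟩ := le_and_le_add_sub_of_sub_mem_Icc hstep hk le_rfl
        push_cast at htail
        apply sub_div_mul_le_seriesPotential_sub hM <;> linarith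
    _ = seriesPotential M (s n) - seriesPotential M 1 := by
        rw [sum_range_sub (fun k => seriesPotential M (s k)), hs0]

theorem key_series_bound_harmonic_general
    (N : ℕ) (y : ℕ → ℝ)
    (hy0 : ∀ i, 1 ≤ i → i ≤ N - 1 → 0 ≤ y i)
    (hy1 : ∀ i, 1 ≤ i → i ≤ N - 1 → y i ≤ 1)
    (m : ℕ) (hm : m = ⌈(1 + ∑ i ∈ Icc 1 (N - 1), y i : ℝ)⌉₊) (hm3 : 3 ≤ m) :
    ∑ k ∈ Icc 1 (N - 1),
        y k / (((N : ℝ) - (k : ℝ)) * (1 + ∑ i ∈ Icc 1 k, y i)) ≤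
      (4 * ∑ l ∈ Icc 1 (m - 2), (1 : ℝ) / (l : ℝ) + 1) / ((m : ℝ) - 1) := by
  set n := N - 1
  set s : ℕ → ℝ := fun k => 1 + ∑ i ∈ Icc 1 k, y i with hs
  have hinc (k : ℕ) : s (k + 1) - s k = y (k + 1) := by
    simp only [hs, sum_Icc_succ_top (Nat.le_add_left 1 k), add_sub_add_left_eq_sub,
      add_sub_cancel_left]
  have hstep : ∀ k < n, s (k + 1) - s k ∈ Set.Icc 0 1 := fun k hk => by
    rw [hinc]
    exact ⟨hy0 _ (by omega) (by omega), hy1 _ (by omega) (by omega)⟩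
  have hs1 : 1 ≤ s n := by
    simpa [hs] using (le_and_le_add_sub_of_sub_mem_Icc hstep (Nat.zero_le n) le_rfl).1
  have hsm : s n ≤ m := hm ▸ Nat.le_ceil _
  have hms : (m : ℝ) - 1 < s n := by linarith [hm ▸ Nat.ceil_lt_add_one (by linarith : 0 ≤ s n)]
  have hterm : ∀ k ∈ range n, y (k + 1) / ((N - (k + 1 : ℕ)) * s (k + 1)) =
      (s (k + 1) - s k) / ((n - k) * s (k + 1)) := fun k hk => by
    have hN : N = n + 1 := by have := mem_range.1 hk; omega
    rw [hinc, hN]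
    push_cast
    ring_nf
  rw [sum_Icc_one_eq_sum_range, sum_congr rfl hterm]
  calc _ ≤ seriesPotential m (s n) - seriesPotential m 1 :=
        sum_sub_div_le_seriesPotential_sub (by exact_mod_cast hm3) (by simp [hs]) hstep hms
    _ ≤ seriesPotentialBound m := seriesPotential_sub_one_le (by exact_mod_cast hm3) hs1 hsm
    _ ≤ _ := by simpa [harmonic_eq_sum_Icc] using seriesPotentialBound_natCast_le_harmonic hm3

/-- Key lemma, Case 1 (`m ≥ 3`): with `S = 1 + ∑_{i=1}^{N−1} y_i`, `m = ⌈S⌉ ≥ 3`,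
`∑_{k=1}^{N−1} y_k/((N−k)(1 + ∑_{i=1}^{k} y_i)) ≤ (4·H_{m−2} + 1)/(m − 1)`,
where `H_j` is the `j`-th harmonic number. -/
theorem key_series_bound_harmonic
    (N : ℕ) (hN : 2 ≤ N) (y : ℕ → ℝ)
    (hy0 : ∀ i, 1 ≤ i → i ≤ N - 1 → 0 ≤ y i)
    (hy1 : ∀ i, 1 ≤ i → i ≤ N - 1 → y i ≤ 1)
    (m : ℕ) (hm : m = ⌈(1 + ∑ i ∈ Icc 1 (N - 1), y i : ℝ)⌉₊) (hm3 : 3 ≤ m) :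
    ∑ k ∈ Icc 1 (N - 1),
        y k / (((N : ℝ) - (k : ℝ)) * (1 + ∑ i ∈ Icc 1 k, y i)) ≤
      (4 * ∑ l ∈ Icc 1 (m - 2), (1 : ℝ) / (l : ℝ) + 1) / ((m : ℝ) - 1) :=
  key_series_bound_harmonic_general N y hy0 hy1 m hm hm3
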